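/- The Euler operator annihilates the product of the discrete characteristic and the EC(λ) scheme: fix Δx > 0, Δt > 0, λ ∈ ℝ. For a grid function u : ℤ × ℤ → ℝ define φ(i,j) = (1/3)·[(u(i,j)² + u(i,j+1)²)/2]·[(u(i,j) + u(i,j+1))/2] + (1/2)·Σ_{j'∈{j,j+1}} (u(i+1,j') − 2u(i,j') + u(i−1,j'))/Δx² + λ·Δx²·[ (u(i+1,j+1) − u(i−1,j+1)) − (u(i+1,j) − u(i−1,j)) ]/(2·Δx·Δt), Ã(i,j) = (φ(i+1,j) − φ(i−1,j))/(2Δx) + (u(i,j+1) − u(i,j))/Δt, and let P(u)(i,j) = φ(i,j)·Ã(i,j), a function of the grid values u(i+a, j+b) for a ∈ {−2,…,2} and b ∈ {0,1}. Then the discrete Euler operator applied to P vanishes identically: for every grid function u and every (m,n) ∈ ℤ × ℤ, the finite sum over the stencil offsets (a,b), a ∈ {−2,−1,0,1,2}, b ∈ {0,1}, of the partial derivative of the stencil function defining P with respect to its (a,b)-entry, evaluated on the window of u based at (m−a, n−b), equals 0. -/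

import Mathlib

noncomputable section

/-- The discrete characteristic `φ = Q̃₃` of the EC(λ) schemes. -/
def phiD (dx dt lam : ℝ) (u : ℤ × ℤ → ℝ) (i j : ℤ) : ℝ :=
  (1 / 3) * ((u (i, j) ^ 2 + u (i, j + 1) ^ 2) / 2) * ((u (i, j) + u (i, j + 1)) / 2)
  + (1 / 2) * ((u (i + 1, j) - 2 * u (i, j) + u (i - 1, j)) / dx ^ 2
             + (u (i + 1, j + 1) - 2 * u (i, j + 1) + u (i - 1, j + 1)) / dx ^ 2)
  + lam * dx ^ 2 * ((u (i + 1, j + 1) - u (i - 1, j + 1)) - (u (i + 1, j) - u (i - 1, j)))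
      / (2 * dx * dt)

/-- The EC(λ) finite difference scheme `Ã` for the mKdV equation. -/
def schemeA (dx dt lam : ℝ) (u : ℤ × ℤ → ℝ) (i j : ℤ) : ℝ :=
  (phiD dx dt lam u (i + 1) j - phiD dx dt lam u (i - 1) j) / (2 * dx)
  + (u (i, j + 1) - u (i, j)) / dt

/-- The stencil function defining the grid expression `P(u)(i,j) = φ(i,j)·Ã(i,j)`:
its argument `w : Fin 5 × Fin 2 → ℝ` collects the grid values `u(i+a, j+b)` for
offsets `a ∈ {−2,…,2}` (encoded as `a + 2 ∈ Fin 5`) and `b ∈ {0,1}`. -/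
def stencilF (dx dt lam : ℝ) (w : Fin 5 × Fin 2 → ℝ) : ℝ :=
  let v : ℤ → ℤ → ℝ := fun a b =>
    w (⟨(a + 2).toNat % 5, by omega⟩, ⟨b.toNat % 2, by omega⟩)
  let phiL : ℤ → ℝ := fun a =>
    (1 / 3) * ((v a 0 ^ 2 + v a 1 ^ 2) / 2) * ((v a 0 + v a 1) / 2)
    + (1 / 2) * ((v (a + 1) 0 - 2 * v a 0 + v (a - 1) 0) / dx ^ 2
               + (v (a + 1) 1 - 2 * v a 1 + v (a - 1) 1) / dx ^ 2)
    + lam * dx ^ 2 * ((v (a + 1) 1 - v (a - 1) 1) - (v (a + 1) 0 - v (a - 1) 0))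
        / (2 * dx * dt)
  phiL 0 * ((phiL 1 - phiL (-1)) / (2 * dx) + (v 0 1 - v 0 0) / dt)

/-- The window of the grid function `u` based at `(i,j)`, as an argument for the
stencil function `stencilF`. -/
def window (u : ℤ × ℤ → ℝ) (i j : ℤ) : Fin 5 × Fin 2 → ℝ :=
  fun d => u (i + (((d.1 : ℕ) : ℤ) - 2), j + ((d.2 : ℕ) : ℤ))

/-! The product `φ·Ã` is a discrete divergence,
`φ·Ã = (F(i+1,j) − F(i,j)) + (G(i,j+1) − G(i,j))`, with flux
`F = φ(i−1,j)·φ(i,j)/(2Δx) + (cross terms of the rows j, j+1)` and energy density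
`G = u⁴/(12Δt) + u·(u(i+1,j) − 2u + u(i−1,j))/(2Δx²Δt)`. The Euler operator at `(m,n)` is the derivative at
`t = 0` of the sum of `P` over the ten windows containing `(m,n)`, after `u(m,n)` is replaced by
`u(m,n) + t`. That sum telescopes to values of `F` and `G` whose stencils miss `(m,n)`, hence does
not depend on `t`. -/

def phiStencil (dx dt lam l0 l1 c0 c1 r0 r1 : ℝ) : ℝ :=
  (1 / 3) * ((c0 ^ 2 + c1 ^ 2) / 2) * ((c0 + c1) / 2)
  + (1 / 2) * ((r0 - 2 * c0 + l0) / dx ^ 2 + (r1 - 2 * c1 + l1) / dx ^ 2)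
  + lam * dx ^ 2 * ((r1 - l1) - (r0 - l0)) / (2 * dx * dt)

theorem phiD_eq_phiStencil (dx dt lam : ℝ) (u : ℤ × ℤ → ℝ) (i j : ℤ) :
    phiD dx dt lam u i j = phiStencil dx dt lam (u (i - 1, j)) (u (i - 1, j + 1))
      (u (i, j)) (u (i, j + 1)) (u (i + 1, j)) (u (i + 1, j + 1)) := rfl

theorem stencilF_eq_phiStencil (dx dt lam : ℝ) (w : Fin 5 × Fin 2 → ℝ) :
    stencilF dx dt lam w =
      phiStencil dx dt lam (w (1, 0)) (w (1, 1)) (w (2, 0)) (w (2, 1)) (w (3, 0)) (w (3, 1))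
      * ((phiStencil dx dt lam (w (2, 0)) (w (2, 1)) (w (3, 0)) (w (3, 1)) (w (4, 0)) (w (4, 1))
          - phiStencil dx dt lam (w (0, 0)) (w (0, 1)) (w (1, 0)) (w (1, 1)) (w (2, 0)) (w (2, 1)))
          / (2 * dx) + (w (2, 1) - w (2, 0)) / dt) := rfl

theorem differentiable_stencilF (dx dt lam : ℝ) : Differentiable ℝ (stencilF dx dt lam) := by
  simp only [funext (stencilF_eq_phiStencil dx dt lam), phiStencil]
  fun_prop

theorem stencilF_window (dx dt lam : ℝ) (u : ℤ × ℤ → ℝ) (i j : ℤ) :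
    stencilF dx dt lam (window u i j) = phiD dx dt lam u i j * schemeA dx dt lam u i j := by
  rw [stencilF_eq_phiStencil, schemeA, phiD_eq_phiStencil, phiD_eq_phiStencil, phiD_eq_phiStencil]
  simp only [window]
  norm_num
  ring_nf

def energyFlux (dx dt lam : ℝ) (u : ℤ × ℤ → ℝ) (i j : ℤ) : ℝ :=
  phiD dx dt lam u (i - 1) j * phiD dx dt lam u i j / (2 * dx)
  + (u (i - 1, j + 1) * u (i, j) - u (i - 1, j) * u (i, j + 1)) / (2 * dx ^ 2 * dt)
  + lam * dx ^ 2 * (u (i - 1, j + 1) - u (i - 1, j)) * (u (i, j + 1) - u (i, j))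
      / (2 * dx * dt ^ 2)

def energyDensity (dx dt : ℝ) (u : ℤ × ℤ → ℝ) (i j : ℤ) : ℝ :=
  u (i, j) ^ 4 / (12 * dt)
  + u (i, j) * (u (i + 1, j) - 2 * u (i, j) + u (i - 1, j)) / (2 * dx ^ 2 * dt)

theorem phiD_mul_schemeA_eq_divergence (dx dt lam : ℝ) (u : ℤ × ℤ → ℝ) (i j : ℤ) :
    phiD dx dt lam u i j * schemeA dx dt lam u i j =
      energyFlux dx dt lam u (i + 1) j - energyFlux dx dt lam u i j
      + (energyDensity dx dt u i (j + 1) - energyDensity dx dt u i j) := by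
  rw [schemeA, energyFlux, energyFlux, energyDensity, energyDensity, add_sub_cancel_right]
  unfold phiD
  ring

theorem energyFlux_congr (dx dt lam : ℝ) {u v : ℤ × ℤ → ℝ} {i : ℤ}
    (h : ∀ a, i - 2 ≤ a → a ≤ i + 1 → ∀ b, u (a, b) = v (a, b)) (j : ℤ) :
    energyFlux dx dt lam u i j = energyFlux dx dt lam v i j := by
  simp only [energyFlux, phiD]
  simp (disch := omega) only [h]

theorem energyDensity_congr (dx dt : ℝ) {u v : ℤ × ℤ → ℝ} {j : ℤ}
    (h : ∀ a, u (a, j) = v (a, j)) (i : ℤ) :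
    energyDensity dx dt u i j = energyDensity dx dt v i j := by
  simp only [energyDensity, h]

theorem sum_window_divergence (F G : ℤ → ℤ → ℝ) (m n : ℤ) :
    ∑ c : Fin 5 × Fin 2,
      (F (m - (((c.1 : ℕ) : ℤ) - 2) + 1) (n - ((c.2 : ℕ) : ℤ))
        - F (m - (((c.1 : ℕ) : ℤ) - 2)) (n - ((c.2 : ℕ) : ℤ))
        + (G (m - (((c.1 : ℕ) : ℤ) - 2)) (n - ((c.2 : ℕ) : ℤ) + 1)
          - G (m - (((c.1 : ℕ) : ℤ) - 2)) (n - ((c.2 : ℕ) : ℤ)))) =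
      ∑ b : Fin 2, (F (m + 3) (n - b) - F (m - 2) (n - b))
      + ∑ a : Fin 5,
          (G (m - (((a : ℕ) : ℤ) - 2)) (n + 1) - G (m - (((a : ℕ) : ℤ) - 2)) (n - 1)) := by
  simp only [Fintype.sum_prod_type, Fin.sum_univ_five, Fin.sum_univ_two]
  norm_num
  ring_nf

theorem add_smul_single_apply_of_ne {ι : Type*} [DecidableEq ι] (u : ι → ℝ) (t : ℝ) {p q : ι}
    (h : p ≠ q) : (u + t • Pi.single q 1 : ι → ℝ) p = u p := by
  simp [h]

theorem window_add_single (u : ℤ × ℤ → ℝ) (m n : ℤ) (c : Fin 5 × Fin 2) (t : ℝ) :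
    window (u + t • Pi.single (m, n) 1) (m - (((c.1 : ℕ) : ℤ) - 2)) (n - ((c.2 : ℕ) : ℤ)) =
      window u (m - (((c.1 : ℕ) : ℤ) - 2)) (n - ((c.2 : ℕ) : ℤ)) + t • Pi.single c 1 := by
  ext d
  have : ((m - (((c.1 : ℕ) : ℤ) - 2) + (((d.1 : ℕ) : ℤ) - 2), n - ((c.2 : ℕ) : ℤ) + ((d.2 : ℕ) : ℤ))
      = (m, n)) ↔ d = c := by
    simp only [Prod.ext_iff, Fin.ext_iff]; omega
  simp only [window, Pi.add_apply, Pi.smul_apply, Pi.single_apply, this]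

theorem hasDerivAt_sum_window_add_single {f : (Fin 5 × Fin 2 → ℝ) → ℝ} (hf : Differentiable ℝ f)
    (u : ℤ × ℤ → ℝ) (m n : ℤ) :
    HasDerivAt
      (fun t : ℝ => ∑ c : Fin 5 × Fin 2,
        f (window (u + t • Pi.single (m, n) 1) (m - (((c.1 : ℕ) : ℤ) - 2)) (n - ((c.2 : ℕ) : ℤ))))
      (∑ c : Fin 5 × Fin 2,
        fderiv ℝ f (window u (m - (((c.1 : ℕ) : ℤ) - 2)) (n - ((c.2 : ℕ) : ℤ))) (Pi.single c 1))
      0 := by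
  simp only [window_add_single]
  exact HasDerivAt.fun_sum fun c _ => (hf _).hasFDerivAt.hasLineDerivAt _

theorem sum_window_phiD_mul_schemeA_add_single (dx dt lam : ℝ) (u : ℤ × ℤ → ℝ) (m n : ℤ)
    (t : ℝ) :
    ∑ c : Fin 5 × Fin 2,
      phiD dx dt lam (u + t • Pi.single (m, n) 1) (m - (((c.1 : ℕ) : ℤ) - 2)) (n - ((c.2 : ℕ) : ℤ))
        * schemeA dx dt lam (u + t • Pi.single (m, n) 1) (m - (((c.1 : ℕ) : ℤ) - 2))
            (n - ((c.2 : ℕ) : ℤ)) =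
    ∑ c : Fin 5 × Fin 2,
      phiD dx dt lam u (m - (((c.1 : ℕ) : ℤ) - 2)) (n - ((c.2 : ℕ) : ℤ))
        * schemeA dx dt lam u (m - (((c.1 : ℕ) : ℤ) - 2)) (n - ((c.2 : ℕ) : ℤ)) := by
  simp only [phiD_mul_schemeA_eq_divergence, sum_window_divergence]
  have hfar : ∀ a b : ℤ, a ≠ m ∨ b ≠ n →
      (u + t • Pi.single (m, n) 1 : ℤ × ℤ → ℝ) (a, b) = u (a, b) :=
    fun a b h => add_smul_single_apply_of_ne u t fun hab => by
      obtain ⟨rfl, rfl⟩ := Prod.mk.inj hab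
      omega
  congr 2
  · ext
    congr 1 <;> apply energyFlux_congr <;> intro a _ _ b <;> exact hfar a b (.inl (by omega))
  · ext
    congr 1 <;> apply energyDensity_congr <;> intro a <;> exact hfar a _ (.inr (by omega))

theorem euler_annihilates_EC_energy_product_general
    (dx dt lam : ℝ) :
    (∀ u : ℤ × ℤ → ℝ, ∀ i j : ℤ,
      stencilF dx dt lam (window u i j) = phiD dx dt lam u i j * schemeA dx dt lam u i j)
    ∧ (∀ u : ℤ × ℤ → ℝ, ∀ m n : ℤ,
        ∑ c : Fin 5 × Fin 2,
          fderiv ℝ (stencilF dx dt lam)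
            (window u (m - (((c.1 : ℕ) : ℤ) - 2)) (n - ((c.2 : ℕ) : ℤ)))
            (Pi.single c 1) = 0) := by
  refine ⟨stencilF_window dx dt lam, fun u m n => ?_⟩
  have hderiv := hasDerivAt_sum_window_add_single (differentiable_stencilF dx dt lam) u m n
  simp only [stencilF_window, sum_window_phiD_mul_schemeA_add_single] at hderiv
  exact hderiv.unique (hasDerivAt_const _ _)

/-- The discrete Euler operator annihilates the product `P = Q̃₃·Ã = φ·Ã` of the
discrete characteristic and the EC(λ) scheme: the stencil function `stencilF`
represents `P` on windows of grid values, and for every grid function `u` and every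
grid point `(m,n)` the sum over the stencil offsets of the partial derivatives of
`stencilF`, each evaluated on the window of `u` based at the back-shifted point,
vanishes. -/
theorem euler_annihilates_EC_energy_product
    (dx dt lam : ℝ) (hdx : 0 < dx) (hdt : 0 < dt) :
    (∀ u : ℤ × ℤ → ℝ, ∀ i j : ℤ,
      stencilF dx dt lam (window u i j) = phiD dx dt lam u i j * schemeA dx dt lam u i j)
    ∧ (∀ u : ℤ × ℤ → ℝ, ∀ m n : ℤ,
        ∑ c : Fin 5 × Fin 2,
          fderiv ℝ (stencilF dx dt lam)
            (window u (m - (((c.1 : ℕ) : ℤ) - 2)) (n - ((c.2 : ℕ) : ℤ)))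
            (Pi.single c 1) = 0) :=
  euler_annihilates_EC_energy_product_general dx dt lam
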